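/- Let N,d ≥ 1, let Δ ∈ ℝ^{N×N} be symmetric positive semidefinite with largest eigenvalue λ₁ and smallest eigenvalue λ₂, let λ > 0, and let 0 < τ ≤ 1/λ₁ (assuming λ₁ > 0). Define the iteration Z^(k+1) = (I − τΔ)Z^(k) from any Z^(0) ∈ ℝ^{N×d}, and the energy E(Z,k) = ‖Z − Z^(k)‖_F² + λ·tr(Zᵀ Δ Z). Then for every k ≥ 1: (1 − τλ₁)² · E(Z^(k), k−1) ≤ E(Z^(k+1), k) ≤ (1 − τλ₂)² · E(Z^(k), k−1). -/

import Mathlib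

/-!
With `M = 1 - τΔ`, one step maps the energy `E(Z^(k), k-1)` to
`E(Z^(k+1), k) = ‖M W‖² + λ tr(Sᵀ (MΔM) S)` with `W = Z^(k) - Z^(k-1)` and `S = Z^(k)`.
Since `M` is a function of `Δ`, the functional calculus turns the Loewner bounds
`a² ≤ M² ≤ b²` and `a² Δ ≤ MΔM ≤ b² Δ` into the scalar bounds `a² ≤ (1 - τx)² ≤ b²` on the
spectrum `x ∈ [λ₂, λ₁]`, where `a = 1 - τλ₁ ≥ 0` and `b = 1 - τλ₂`; conjugating by `W` and `S`
and taking traces preserves them.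
-/

open Matrix
open scoped MatrixOrder

namespace Matrix

variable {m n : Type*} [Fintype m] [Fintype n]

theorem sum_sum_sq_eq_trace_transpose_mul_self (W : Matrix m n ℝ) :
    ∑ i, ∑ j, W i j ^ 2 = (Wᵀ * W).trace := by
  simp only [trace, diag, mul_apply, transpose_apply, sq]
  rw [Finset.sum_comm]

theorem trace_transpose_mul_mul_mono {P Q : Matrix n n ℝ} (h : P ≤ Q) (W : Matrix n m ℝ) :
    (Wᵀ * P * W).trace ≤ (Wᵀ * Q * W).trace := by
  have hconj := (le_iff.mp h).conjTranspose_mul_mul_same W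
  rw [conjTranspose_eq_transpose_of_trivial, Matrix.mul_sub, Matrix.sub_mul] at hconj
  simpa only [trace_sub, sub_nonneg] using hconj.trace_nonneg

theorem trace_conj_transpose_mul_mul {M : Matrix n n ℝ} (hM : Mᵀ = M) (P : Matrix n n ℝ)
    (W : Matrix n m ℝ) : ((M * W)ᵀ * P * (M * W)).trace = (Wᵀ * (M * P * M) * W).trace := by
  simp only [transpose_mul, hM, Matrix.mul_assoc]

theorem smul_trace_le_trace_conj {M P : Matrix n n ℝ} (hM : Mᵀ = M) {c : ℝ}
    (h : c • P ≤ M * P * M) (W : Matrix n m ℝ) :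
    c * (Wᵀ * P * W).trace ≤ ((M * W)ᵀ * P * (M * W)).trace := by
  have key := trace_transpose_mul_mul_mono h W
  rwa [Matrix.mul_smul, Matrix.smul_mul, trace_smul, smul_eq_mul,
    ← trace_conj_transpose_mul_mul hM] at key

theorem trace_conj_le_smul_trace {M P : Matrix n n ℝ} (hM : Mᵀ = M) {c : ℝ}
    (h : M * P * M ≤ c • P) (W : Matrix n m ℝ) :
    ((M * W)ᵀ * P * (M * W)).trace ≤ c * (Wᵀ * P * W).trace := by
  have key := trace_transpose_mul_mul_mono h W
  rwa [Matrix.mul_smul, Matrix.smul_mul, trace_smul, smul_eq_mul,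
    ← trace_conj_transpose_mul_mul hM] at key

end Matrix

section SelfAdjoint

variable {A : Type*} [Ring A] [StarRing A] [TopologicalSpace A] [Algebra ℝ A]
  [ContinuousFunctionalCalculus ℝ A IsSelfAdjoint] {a : A}

theorem IsSelfAdjoint.one_sub_smul_mul_cfc_mul_one_sub_smul (ha : IsSelfAdjoint a) (τ : ℝ)
    {g : ℝ → ℝ} (hg : ContinuousOn g (spectrum ℝ a)) :
    (1 - τ • a) * cfc g a * (1 - τ • a) = cfc (fun x => (1 - τ * x) ^ 2 * g x) a := by
  have hM : cfc (fun x => 1 - τ * x) a = 1 - τ • a := by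
    rw [cfc_sub _ _ a, cfc_const_one ℝ a, cfc_const_mul_id τ a]
  rw [← hM, ← cfc_mul _ _ a, ← cfc_mul _ _ a]
  congr 1
  ext x
  ring

variable [PartialOrder A] [StarOrderedRing A]

theorem IsSelfAdjoint.smul_cfc_le_one_sub_smul_conj (ha : IsSelfAdjoint a) {τ c : ℝ}
    {g : ℝ → ℝ} (hg : ContinuousOn g (spectrum ℝ a))
    (h : ∀ x ∈ spectrum ℝ a, c * g x ≤ (1 - τ * x) ^ 2 * g x) :
    c • cfc g a ≤ (1 - τ • a) * cfc g a * (1 - τ • a) := by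
  rw [ha.one_sub_smul_mul_cfc_mul_one_sub_smul τ hg, ← cfc_const_mul c g a]
  exact cfc_mono h

theorem IsSelfAdjoint.one_sub_smul_conj_le_smul_cfc (ha : IsSelfAdjoint a) {τ c : ℝ}
    {g : ℝ → ℝ} (hg : ContinuousOn g (spectrum ℝ a))
    (h : ∀ x ∈ spectrum ℝ a, (1 - τ * x) ^ 2 * g x ≤ c * g x) :
    (1 - τ • a) * cfc g a * (1 - τ • a) ≤ c • cfc g a := by
  rw [ha.one_sub_smul_mul_cfc_mul_one_sub_smul τ hg, ← cfc_const_mul c g a]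
  exact cfc_mono h

end SelfAdjoint

theorem Matrix.IsHermitian.transpose_one_sub_smul {n : Type*} [DecidableEq n]
    {Δ : Matrix n n ℝ} (hΔ : Δ.IsHermitian) (τ : ℝ) :
    (1 - τ • Δ)ᵀ = 1 - τ • Δ := by
  rw [transpose_sub, transpose_one, transpose_smul, ← conjTranspose_eq_transpose_of_trivial, hΔ.eq]

theorem sq_one_sub_mul_le_of_le {τ x y : ℝ} (hτ : 0 ≤ τ) (hy : τ * y ≤ 1) (hxy : x ≤ y) :
    (1 - τ * y) ^ 2 ≤ (1 - τ * x) ^ 2 :=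
  pow_le_pow_left₀ (by linarith) (by nlinarith) 2

section Energy

variable {m n : Type*} [Fintype m] [Fintype n]

/-- `diffusionEnergy Δ lam Z (Z^(k))` is the paper's `E(Z, k)`. -/
def diffusionEnergy (Δ : Matrix n n ℝ) (lam : ℝ) (Z Z₀ : Matrix n m ℝ) : ℝ :=
  ∑ i, ∑ c, (Z i c - Z₀ i c) ^ 2 + lam * (Zᵀ * Δ * Z).trace

theorem diffusionEnergy_eq (Δ : Matrix n n ℝ) (lam : ℝ) (Z Z₀ : Matrix n m ℝ) :
    diffusionEnergy Δ lam Z Z₀ = ((Z - Z₀)ᵀ * (Z - Z₀)).trace + lam * (Zᵀ * Δ * Z).trace := by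
  rw [diffusionEnergy, ← sum_sum_sq_eq_trace_transpose_mul_self]
  rfl

variable [DecidableEq n] {Δ M : Matrix n n ℝ} {lam c : ℝ}

theorem smul_diffusionEnergy_le_mul (hM : Mᵀ = M) (h1 : c • (1 : Matrix n n ℝ) ≤ M * M)
    (hΔ : c • Δ ≤ M * Δ * M) (hlam : 0 ≤ lam) (Z Z₀ : Matrix n m ℝ) :
    c * diffusionEnergy Δ lam Z Z₀ ≤ diffusionEnergy Δ lam (M * Z) (M * Z₀) := by
  have hdiff := smul_trace_le_trace_conj hM (P := 1) (by rwa [Matrix.mul_one]) (Z - Z₀)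
  have hquad := smul_trace_le_trace_conj hM hΔ Z
  simp only [Matrix.mul_one] at hdiff
  rw [diffusionEnergy_eq, diffusionEnergy_eq, ← Matrix.mul_sub]
  nlinarith [mul_le_mul_of_nonneg_left hquad hlam]

theorem diffusionEnergy_mul_le_smul (hM : Mᵀ = M) (h1 : M * M ≤ c • (1 : Matrix n n ℝ))
    (hΔ : M * Δ * M ≤ c • Δ) (hlam : 0 ≤ lam) (Z Z₀ : Matrix n m ℝ) :
    diffusionEnergy Δ lam (M * Z) (M * Z₀) ≤ c * diffusionEnergy Δ lam Z Z₀ := by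
  have hdiff := trace_conj_le_smul_trace hM (P := 1) (by rwa [Matrix.mul_one]) (Z - Z₀)
  have hquad := trace_conj_le_smul_trace hM hΔ Z
  simp only [Matrix.mul_one] at hdiff
  rw [diffusionEnergy_eq, diffusionEnergy_eq, ← Matrix.mul_sub]
  nlinarith [mul_le_mul_of_nonneg_left hquad hlam]

theorem Matrix.IsHermitian.smul_diffusionEnergy_le_one_sub_smul_mul (hΔ : Δ.IsHermitian) {τ : ℝ}
    (hspec : ∀ x ∈ spectrum ℝ Δ, 0 ≤ x ∧ c ≤ (1 - τ * x) ^ 2) (hlam : 0 ≤ lam)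
    (Z Z₀ : Matrix n m ℝ) :
    c * diffusionEnergy Δ lam Z Z₀
      ≤ diffusionEnergy Δ lam ((1 - τ • Δ) * Z) ((1 - τ • Δ) * Z₀) := by
  refine smul_diffusionEnergy_le_mul (hΔ.transpose_one_sub_smul τ) ?_ ?_ hlam Z Z₀
  · simpa [cfc_const_one ℝ Δ] using hΔ.isSelfAdjoint.smul_cfc_le_one_sub_smul_conj
      (g := fun _ => 1) continuousOn_const fun x hx => by simpa using (hspec x hx).2
  · simpa [cfc_id' ℝ Δ] using hΔ.isSelfAdjoint.smul_cfc_le_one_sub_smul_conj (g := fun x => x)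
      continuousOn_id fun x hx => mul_le_mul_of_nonneg_right (hspec x hx).2 (hspec x hx).1

theorem Matrix.IsHermitian.diffusionEnergy_one_sub_smul_mul_le_smul (hΔ : Δ.IsHermitian) {τ : ℝ}
    (hspec : ∀ x ∈ spectrum ℝ Δ, 0 ≤ x ∧ (1 - τ * x) ^ 2 ≤ c) (hlam : 0 ≤ lam)
    (Z Z₀ : Matrix n m ℝ) :
    diffusionEnergy Δ lam ((1 - τ • Δ) * Z) ((1 - τ • Δ) * Z₀)
      ≤ c * diffusionEnergy Δ lam Z Z₀ := by
  refine diffusionEnergy_mul_le_smul (hΔ.transpose_one_sub_smul τ) ?_ ?_ hlam Z Z₀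
  · simpa [cfc_const_one ℝ Δ] using hΔ.isSelfAdjoint.one_sub_smul_conj_le_smul_cfc
      (g := fun _ => 1) continuousOn_const fun x hx => by simpa using (hspec x hx).2
  · simpa [cfc_id' ℝ Δ] using hΔ.isSelfAdjoint.one_sub_smul_conj_le_smul_cfc (g := fun x => x)
      continuousOn_id fun x hx => mul_le_mul_of_nonneg_right (hspec x hx).2 (hspec x hx).1

end Energy

theorem stmt_5_general (N d : ℕ)
    (Δ : Matrix (Fin N) (Fin N) ℝ)
    (hH : Δ.IsHermitian) (hΔ : Δ.PosSemidef)
    (lam1 lam2 : ℝ)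
    (hlam1 : IsGreatest (Set.range hH.eigenvalues) lam1)
    (hlam2 : IsLeast (Set.range hH.eigenvalues) lam2)
    (lam : ℝ) (hlam : 0 < lam)
    (hlam1pos : 0 < lam1)
    (τ : ℝ) (hτ : 0 < τ) (hτ1 : τ ≤ 1 / lam1)
    (Z : ℕ → Matrix (Fin N) (Fin d) ℝ)
    (hZ : ∀ k, Z (k + 1) = ((1 : Matrix (Fin N) (Fin N) ℝ) - τ • Δ) * Z k) :
    ∀ k, 1 ≤ k →
      (1 - τ * lam1) ^ 2 * ((∑ i, ∑ c, (Z k i c - Z (k - 1) i c) ^ 2)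
            + lam * ((Z k)ᵀ * Δ * Z k).trace)
          ≤ (∑ i, ∑ c, (Z (k + 1) i c - Z k i c) ^ 2)
            + lam * ((Z (k + 1))ᵀ * Δ * Z (k + 1)).trace
      ∧ (∑ i, ∑ c, (Z (k + 1) i c - Z k i c) ^ 2)
            + lam * ((Z (k + 1))ᵀ * Δ * Z (k + 1)).trace
          ≤ (1 - τ * lam2) ^ 2 * ((∑ i, ∑ c, (Z k i c - Z (k - 1) i c) ^ 2)
            + lam * ((Z k)ᵀ * Δ * Z k).trace) := by
  rintro k hk
  obtain ⟨m, rfl⟩ := Nat.exists_eq_add_of_le' hk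
  have hτlam1 : τ * lam1 ≤ 1 := (le_div_iff₀ hlam1pos).mp hτ1
  have hspec : ∀ x ∈ spectrum ℝ Δ, 0 ≤ x ∧ (1 - τ * lam1) ^ 2 ≤ (1 - τ * x) ^ 2
      ∧ (1 - τ * x) ^ 2 ≤ (1 - τ * lam2) ^ 2 := by
    rw [hH.spectrum_real_eq_range_eigenvalues]
    rintro _ ⟨i, rfl⟩
    have hle1 := hlam1.2 (Set.mem_range_self i)
    exact ⟨hΔ.eigenvalues_nonneg i, sq_one_sub_mul_le_of_le hτ.le hτlam1 hle1,
      sq_one_sub_mul_le_of_le hτ.le (by nlinarith) (hlam2.2 (Set.mem_range_self i))⟩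
  rw [Nat.add_sub_cancel, hZ (m + 1), hZ m]
  exact ⟨hH.smul_diffusionEnergy_le_one_sub_smul_mul
      (fun x hx => ⟨(hspec x hx).1, (hspec x hx).2.1⟩) hlam.le _ _,
    hH.diffusionEnergy_one_sub_smul_mul_le_smul
      (fun x hx => ⟨(hspec x hx).1, (hspec x hx).2.2⟩) hlam.le _ _⟩

/-- layer-wise upper and lower bounds for the energy
`E(Z,k) = ‖Z − Z^(k)‖_F² + λ tr(Zᵀ Δ Z)` along the diffusion iteration
`Z^(k+1) = (I − τΔ) Z^(k)`, in terms of the largest eigenvalue `lam1` and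
smallest eigenvalue `lam2` of the symmetric PSD matrix `Δ`. -/
theorem stmt_5 (N d : ℕ) (hN : 1 ≤ N) (hd : 1 ≤ d)
    (Δ : Matrix (Fin N) (Fin N) ℝ)
    (hH : Δ.IsHermitian) (hΔ : Δ.PosSemidef)
    (lam1 lam2 : ℝ)
    (hlam1 : IsGreatest (Set.range hH.eigenvalues) lam1)
    (hlam2 : IsLeast (Set.range hH.eigenvalues) lam2)
    (lam : ℝ) (hlam : 0 < lam)
    (hlam1pos : 0 < lam1)
    (τ : ℝ) (hτ : 0 < τ) (hτ1 : τ ≤ 1 / lam1)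
    (Z : ℕ → Matrix (Fin N) (Fin d) ℝ)
    (hZ : ∀ k, Z (k + 1) = ((1 : Matrix (Fin N) (Fin N) ℝ) - τ • Δ) * Z k) :
    ∀ k, 1 ≤ k →
      (1 - τ * lam1) ^ 2 * ((∑ i, ∑ c, (Z k i c - Z (k - 1) i c) ^ 2)
            + lam * ((Z k)ᵀ * Δ * Z k).trace)
          ≤ (∑ i, ∑ c, (Z (k + 1) i c - Z k i c) ^ 2)
            + lam * ((Z (k + 1))ᵀ * Δ * Z (k + 1)).trace
      ∧ (∑ i, ∑ c, (Z (k + 1) i c - Z k i c) ^ 2)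
            + lam * ((Z (k + 1))ᵀ * Δ * Z (k + 1)).trace
          ≤ (1 - τ * lam2) ^ 2 * ((∑ i, ∑ c, (Z k i c - Z (k - 1) i c) ^ 2)
            + lam * ((Z k)ᵀ * Δ * Z k).trace) :=
  stmt_5_general N d Δ hH hΔ lam1 lam2 hlam1 hlam2 lam hlam hlam1pos τ hτ hτ1 Z hZ
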